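/- On the enlarged phase space with configuration variables (q, p) ∈ ℝ^N × ℝ^N and conjugate momenta (π_q, π_p), let H_E and B be smooth functions of (q, p) only, and define the first-class Hamiltonian obtained by plugging the fixed Lagrange multipliers into the total Hamiltonian: H := H_E + ∑_i (∂H_E/∂p_i) φ_{q^i} − ∑_i (∂H_E/∂q^i) φ_{p_i}, where φ_{q^i} = π_{q^i} − p_i + ∂B/∂q^i and φ_{p_i} = π_{p_i} + ∂B/∂p_i. Then for every smooth function f of (q, p) alone, the enlarged-phase-space Poisson bracket satisfies {f, H} = ∑_i (∂f/∂q^i · ∂H_E/∂p_i − ∂f/∂p_i · ∂H_E/∂q^i), i.e. it equals the original canonical Poisson bracket of f with H_E on the original phase space (q, p), strongly and independently of the boundary function B. Hence the enlarged formulation reproduces the original Hamiltonian dynamics of all functions of (q, p). -/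

import Mathlib

/-- The canonical Poisson bracket on the phase space `ℝⁿ × ℝⁿ` with coordinates `(xᵘ; πᵤ)`:
`{f, g} = ∑ᵤ (∂f/∂xᵘ · ∂g/∂πᵤ − ∂f/∂πᵤ · ∂g/∂xᵘ)`. -/
noncomputable def poissonBracket {ι : Type*} [Fintype ι] [DecidableEq ι]
    (f g : ((ι → ℝ) × (ι → ℝ)) → ℝ) (z : (ι → ℝ) × (ι → ℝ)) : ℝ :=
  ∑ μ, (fderiv ℝ f z (Pi.single μ 1, 0) * fderiv ℝ g z (0, Pi.single μ 1)
      - fderiv ℝ f z (0, Pi.single μ 1) * fderiv ℝ g z (Pi.single μ 1, 0))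

/-- The `q`-part of an enlarged configuration `x : (Fin N ⊕ Fin N) → ℝ`. -/
def qOf (N : ℕ) (x : (Fin N ⊕ Fin N) → ℝ) : Fin N → ℝ := fun i => x (Sum.inl i)

/-- The `p`-part of an enlarged configuration `x : (Fin N ⊕ Fin N) → ℝ`. -/
def pOf (N : ℕ) (x : (Fin N ⊕ Fin N) → ℝ) : Fin N → ℝ := fun i => x (Sum.inr i)

/-- Primary constraint `φ_{qⁱ} = π_{qⁱ} − pᵢ + ∂B/∂qⁱ` on the enlarged phase space whose
configuration variables are `(q, p)`. -/
noncomputable def phiQ (N : ℕ) (B : (Fin N → ℝ) × (Fin N → ℝ) → ℝ) (i : Fin N) :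
    ((Fin N ⊕ Fin N) → ℝ) × ((Fin N ⊕ Fin N) → ℝ) → ℝ :=
  fun z => z.2 (Sum.inl i) - z.1 (Sum.inr i)
    + fderiv ℝ B (qOf N z.1, pOf N z.1) (Pi.single i 1, 0)

/-- Primary constraint `φ_{pᵢ} = π_{pᵢ} + ∂B/∂pᵢ` on the enlarged phase space whose
configuration variables are `(q, p)`. -/
noncomputable def phiP (N : ℕ) (B : (Fin N → ℝ) × (Fin N → ℝ) → ℝ) (i : Fin N) :
    ((Fin N ⊕ Fin N) → ℝ) × ((Fin N ⊕ Fin N) → ℝ) → ℝ :=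
  fun z => z.2 (Sum.inr i) + fderiv ℝ B (qOf N z.1, pOf N z.1) (0, Pi.single i 1)


section AuxEnlarged

open ContinuousLinearMap

/-- The continuous linear map sending an enlarged phase-space point to `(q, p)`. -/
noncomputable def Lmap (N : ℕ) :
    (((Fin N ⊕ Fin N) → ℝ) × ((Fin N ⊕ Fin N) → ℝ)) →L[ℝ] ((Fin N → ℝ) × (Fin N → ℝ)) :=
  (((ContinuousLinearMap.pi fun i => ContinuousLinearMap.proj (Sum.inl i))).comp
      (ContinuousLinearMap.fst ℝ _ _)).prod
    (((ContinuousLinearMap.pi fun i => ContinuousLinearMap.proj (Sum.inr i))).comp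
      (ContinuousLinearMap.fst ℝ _ _))

lemma Lmap_apply (N : ℕ) (w : ((Fin N ⊕ Fin N) → ℝ) × ((Fin N ⊕ Fin N) → ℝ)) :
    Lmap N w = (qOf N w.1, pOf N w.1) := rfl

lemma Lmap_zero_fst (N : ℕ) (e : (Fin N ⊕ Fin N) → ℝ) :
    Lmap N (0, e) = 0 := rfl

lemma Lmap_single_inl (N : ℕ) (i : Fin N) :
    Lmap N (Pi.single (Sum.inl i) 1, 0) = (Pi.single i 1, 0) := by
  refine Prod.ext ?_ ?_ <;> funext j <;>
    simp [Lmap, qOf, pOf, Pi.single_apply, Sum.inl.injEq]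

lemma Lmap_single_inr (N : ℕ) (i : Fin N) :
    Lmap N (Pi.single (Sum.inr i) 1, 0) = (0, Pi.single i 1) := by
  refine Prod.ext ?_ ?_ <;> funext j <;>
    simp [Lmap, qOf, pOf, Pi.single_apply, Sum.inr.injEq]

end AuxEnlarged

/-- With the first-class Hamiltonian
`H = H_E + ∑ᵢ (∂H_E/∂pᵢ) φ_{qⁱ} − ∑ᵢ (∂H_E/∂qⁱ) φ_{pᵢ}` obtained by plugging the fixed
Lagrange multipliers into the total Hamiltonian, for every smooth function `f` of `(q, p)`
alone the enlarged-phase-space Poisson bracket satisfies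
`{f, H} = ∑ᵢ (∂f/∂qⁱ ∂H_E/∂pᵢ − ∂f/∂pᵢ ∂H_E/∂qⁱ)`, i.e. it equals the original canonical
Poisson bracket of `f` with `H_E`, strongly and independently of the boundary function `B`:
the enlarged formulation reproduces the original Hamiltonian dynamics of all functions of
`(q, p)`. -/
theorem enlarged_bracket_reproduces_original_dynamics
    (N : ℕ)
    (HE B : (Fin N → ℝ) × (Fin N → ℝ) → ℝ)
    (hHE : ContDiff ℝ (⊤ : ℕ∞) HE) (hB : ContDiff ℝ (⊤ : ℕ∞) B)
    (f : (Fin N → ℝ) × (Fin N → ℝ) → ℝ) (hf : ContDiff ℝ (⊤ : ℕ∞) f) :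
    ∀ z : ((Fin N ⊕ Fin N) → ℝ) × ((Fin N ⊕ Fin N) → ℝ),
      poissonBracket (fun w => f (qOf N w.1, pOf N w.1))
        (fun w => HE (qOf N w.1, pOf N w.1)
          + (∑ i, fderiv ℝ HE (qOf N w.1, pOf N w.1) (0, Pi.single i 1) * phiQ N B i w)
          - (∑ i, fderiv ℝ HE (qOf N w.1, pOf N w.1) (Pi.single i 1, 0) * phiP N B i w)) z
      = ∑ i, (fderiv ℝ f (qOf N z.1, pOf N z.1) (Pi.single i 1, 0)
                * fderiv ℝ HE (qOf N z.1, pOf N z.1) (0, Pi.single i 1)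
              - fderiv ℝ f (qOf N z.1, pOf N z.1) (0, Pi.single i 1)
                * fderiv ℝ HE (qOf N z.1, pOf N z.1) (Pi.single i 1, 0)) := by
  intro z
  classical
  have hHE' : ContDiff ℝ (↑(⊤ : ℕ∞)) HE := hHE.of_le (by simp)
  have hB' : ContDiff ℝ (↑(⊤ : ℕ∞)) B := hB.of_le (by simp)
  have hf' : ContDiff ℝ (↑(⊤ : ℕ∞)) f := hf.of_le (by simp)
  have hdHE : ∀ v, ContDiff ℝ (↑(⊤ : ℕ∞)) fun x => fderiv ℝ HE x v := fun v =>
    (contDiff_infty_iff_fderiv.mp hHE').2.clm_apply contDiff_const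
  have hdB : ∀ v, ContDiff ℝ (↑(⊤ : ℕ∞)) fun x => fderiv ℝ B x v := fun v =>
    (contDiff_infty_iff_fderiv.mp hB').2.clm_apply contDiff_const
  set Qz := (qOf N z.1, pOf N z.1) with hQzdef
  have key : ∀ (g : (Fin N → ℝ) × (Fin N → ℝ) → ℝ), ContDiff ℝ (↑(⊤ : ℕ∞)) g →
      HasFDerivAt (fun w : ((Fin N ⊕ Fin N) → ℝ) × ((Fin N ⊕ Fin N) → ℝ) =>
          g (qOf N w.1, pOf N w.1))
        ((fderiv ℝ g Qz).comp (Lmap N)) z := fun g hg =>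
    ((hg.differentiable (by simp) Qz).hasFDerivAt).comp z (Lmap N).hasFDerivAt
  -- linear coordinate maps
  set πQ : Fin N → ((((Fin N ⊕ Fin N) → ℝ) × ((Fin N ⊕ Fin N) → ℝ)) →L[ℝ] ℝ) :=
    fun i => (ContinuousLinearMap.proj (Sum.inl i)).comp (ContinuousLinearMap.snd ℝ _ _)
    with hπQ
  set πP : Fin N → ((((Fin N ⊕ Fin N) → ℝ) × ((Fin N ⊕ Fin N) → ℝ)) →L[ℝ] ℝ) :=
    fun i => (ContinuousLinearMap.proj (Sum.inr i)).comp (ContinuousLinearMap.snd ℝ _ _)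
    with hπP
  set pc : Fin N → ((((Fin N ⊕ Fin N) → ℝ) × ((Fin N ⊕ Fin N) → ℝ)) →L[ℝ] ℝ) :=
    fun i => (ContinuousLinearMap.proj (Sum.inr i)).comp (ContinuousLinearMap.fst ℝ _ _)
    with hpc
  have hφQ : ∀ i, HasFDerivAt (phiQ N B i)
      (πQ i - pc i + (fderiv ℝ (fun x => fderiv ℝ B x (Pi.single i 1, 0)) Qz).comp (Lmap N))
      z := fun i =>
    (((πQ i).hasFDerivAt.sub (pc i).hasFDerivAt).add (key _ (hdB _)))
  have hφP : ∀ i, HasFDerivAt (phiP N B i)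
      (πP i + (fderiv ℝ (fun x => fderiv ℝ B x (0, Pi.single i 1)) Qz).comp (Lmap N))
      z := fun i =>
    ((πP i).hasFDerivAt.add (key _ (hdB _)))
  have hA : ∀ i, HasFDerivAt (fun w : ((Fin N ⊕ Fin N) → ℝ) × ((Fin N ⊕ Fin N) → ℝ) =>
        fderiv ℝ HE (qOf N w.1, pOf N w.1) (0, Pi.single i 1))
      ((fderiv ℝ (fun x => fderiv ℝ HE x (0, Pi.single i 1)) Qz).comp (Lmap N)) z :=
    fun i => key _ (hdHE _)
  have hC : ∀ i, HasFDerivAt (fun w : ((Fin N ⊕ Fin N) → ℝ) × ((Fin N ⊕ Fin N) → ℝ) =>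
        fderiv ℝ HE (qOf N w.1, pOf N w.1) (Pi.single i 1, 0))
      ((fderiv ℝ (fun x => fderiv ℝ HE x (Pi.single i 1, 0)) Qz).comp (Lmap N)) z :=
    fun i => key _ (hdHE _)
  have hS1 := HasFDerivAt.fun_sum (u := Finset.univ)
    (fun i (_ : i ∈ Finset.univ) => (hA i).mul (hφQ i))
  have hS2 := HasFDerivAt.fun_sum (u := Finset.univ)
    (fun i (_ : i ∈ Finset.univ) => (hC i).mul (hφP i))
  have hH : HasFDerivAt (fun w : ((Fin N ⊕ Fin N) → ℝ) × ((Fin N ⊕ Fin N) → ℝ) =>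
      HE (qOf N w.1, pOf N w.1)
        + (∑ i, fderiv ℝ HE (qOf N w.1, pOf N w.1) (0, Pi.single i 1) * phiQ N B i w)
        - (∑ i, fderiv ℝ HE (qOf N w.1, pOf N w.1) (Pi.single i 1, 0) * phiP N B i w)) _ z :=
    ((key HE hHE').add hS1).sub hS2
  have hF : HasFDerivAt (fun w : ((Fin N ⊕ Fin N) → ℝ) × ((Fin N ⊕ Fin N) → ℝ) =>
      f (qOf N w.1, pOf N w.1)) _ z := key f hf'
  unfold poissonBracket
  simp only [hF.fderiv, hH.fderiv]
  rw [Fintype.sum_sum_type]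
  simp only [ContinuousLinearMap.comp_apply, ContinuousLinearMap.add_apply,
    ContinuousLinearMap.sub_apply, ContinuousLinearMap.coe_sub', ContinuousLinearMap.coe_add',
    Pi.add_apply, Pi.sub_apply, ContinuousLinearMap.coe_sum', Finset.sum_apply,
    ContinuousLinearMap.smul_apply, smul_eq_mul, Lmap_zero_fst, Lmap_single_inl,
    Lmap_single_inr, map_zero, hπQ, hπP, hpc, ContinuousLinearMap.proj_apply,
    ContinuousLinearMap.coe_snd', ContinuousLinearMap.coe_fst', Pi.zero_apply,
    Pi.single_apply, Sum.inl.injEq, Sum.inr.injEq, mul_ite, mul_one, mul_zero,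
    Finset.sum_ite_eq', Finset.mem_univ, if_true, reduceCtorEq, if_false,
    Finset.sum_const_zero, add_zero, zero_add, sub_zero, zero_sub, zero_mul, mul_zero,
    mul_neg, sub_self]
  simp only [Pi.single_apply, Sum.inl.injEq, Sum.inr.injEq, mul_ite, mul_one, mul_zero,
    Finset.sum_ite_eq', Finset.mem_univ, if_true, ← hQzdef]

  simp [Finset.sum_sub_distrib, sub_eq_add_neg, Finset.sum_neg_distrib]
  rw [Finset.sum_add_distrib, Finset.sum_neg_distrib]
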